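/- Let F be an exponential field (a field of characteristic 0 with a group homomorphism exp from its additive to its multiplicative group), let K ⊆ F be a subfield, and let X ⊆ F. Then the K-powers hull of X is contained in the exponential hull of X ∪ K; i.e., any Q-subspace D containing X ∪ K which is exponentially strong in F (meaning δ^exp(z/D) = td(z, exp(z)/D, exp(D)) − ldim_Q(z/D) ≥ 0 for all finite tuples z) is also strong in the K-powered field sense (meaning δ^K(z/D) = ldim_K(z/D) + td(exp(z)/exp(D)) − ldim_Q(z/D) ≥ 0 for all finite tuples z). -/

import Mathlib

open Set Submodule

/-- Relative linear dimension: the dimension of the span of `A ∪ B` modulo the span of `B`. -/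
noncomputable def ldim (R : Type*) [DivisionRing R] {V : Type*} [AddCommGroup V] [Module R V]
    (A B : Set V) : ℕ :=
  Module.finrank R (↥(span R (A ∪ B)) ⧸ (span R B).comap (span R (A ∪ B)).subtype)

/-- Relative transcendence degree of `A` over (the field generated by) `B`. -/
noncomputable def td {F : Type*} [Field F] [CharZero F] (A B : Set F) : ℕ :=
  sSup {n : ℕ | ∃ s : Fin n → F, (∀ i, s i ∈ A) ∧
    AlgebraicIndependent (Algebra.adjoin ℚ B) s}

/-- A partial K-powered field: a ℚ-subspace `D` of a `K`-vector space `V` together with a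
partial exponential group homomorphism into `Fˣ`, such that `D` `K`-spans `V` and
`exp(D)` generates `F` as a field. -/
structure PPF (K : Type) [Field K] [CharZero K] where
  V : Type
  F : Type
  [addV : AddCommGroup V]
  [modK : Module K V]
  [modQ : Module ℚ V]
  [fieldF : Field F]
  [charF : CharZero F]
  D : Submodule ℚ V
  exp : V → F
  exp_ne_zero : ∀ x ∈ D, exp x ≠ 0
  exp_add : ∀ x ∈ D, ∀ y ∈ D, exp (x + y) = exp x * exp y
  spans : span K (D : Set V) = ⊤
  generates : Subfield.closure (exp '' D) = ⊤

attribute [instance] PPF.addV PPF.modK PPF.modQ PPF.fieldF PPF.charF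

variable {K : Type} [Field K] [CharZero K]

/-- The predimension δ(A/B) = ldim_K(A/B) + td(exp A / exp B) − ldim_ℚ(A/B). -/
noncomputable def PPF.delta (P : PPF K) (A B : Set P.V) : ℤ :=
  (ldim K A B : ℤ) + (td (P.exp '' A) (P.exp '' B) : ℤ) - (ldim ℚ A B : ℤ)

/-- A subset is strong in `P` if every finite tuple from the domain `D` has
nonnegative predimension over it. -/
def PPF.StrongIn (P : PPF K) (S : Set P.V) : Prop :=
  ∀ (n : ℕ) (z : Fin n → P.V), (∀ i, z i ∈ P.D) → 0 ≤ P.delta (Set.range z) S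

/-- A strong extension `D₀ ◁ D₁` of sub-partial-K-powered fields of `P`:
kernel-preserving, and every finite tuple from `D₁` has nonnegative predimension over `D₀`. -/
def PPF.StrongExt (P : PPF K) (D₀ D₁ : Submodule ℚ P.V) : Prop :=
  D₀ ≤ D₁ ∧ D₁ ≤ P.D ∧ (∀ x ∈ D₁, P.exp x = 1 → x ∈ D₀) ∧
    ∀ (n : ℕ) (z : Fin n → P.V), (∀ i, z i ∈ D₁) → 0 ≤ P.delta (Set.range z) (D₀ : Set P.V)

/-- The K-powers closure of `A` inside the sub-powered-field `E` of `P`. -/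
def PPF.pclIn (P : PPF K) (E : Submodule ℚ P.V) (A : Set P.V) : Submodule ℚ P.V :=
  sInf {S | A ⊆ S ∧ S ≤ E ∧ ∀ (n : ℕ) (z : Fin n → P.V), (∀ i, z i ∈ E) →
      P.delta (Set.range z) (S : Set P.V) ≤ 0 → ∀ i, z i ∈ S}

/-- Powers-transcendence degree of `A` over `B`, computed in the sub-powered-field `E` of `P`:
the least size of a tuple from `E` whose adjunction to `B` captures `A` in the closure. -/
noncomputable def PPF.ktdIn (P : PPF K) (E : Submodule ℚ P.V) (A B : Set P.V) : ℕ :=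
  sInf {m | ∃ s : Fin m → P.V, (∀ i, s i ∈ E) ∧ A ⊆ P.pclIn E (B ∪ Set.range s)}

/-- `S` is a purely powers-transcendental extension of `D₀` inside `P`: every finite tuple
from `S` not entirely contained in `D₀` has strictly positive predimension over `D₀`. -/
def PPF.PPT (P : PPF K) (D₀ S : Submodule ℚ P.V) : Prop :=
  D₀ ≤ S ∧ ∀ (n : ℕ) (z : Fin n → P.V), (∀ i, z i ∈ S) → (∃ i, z i ∉ D₀) →
    0 < P.delta (Set.range z) (D₀ : Set P.V)

/-- The subfield of `F` generated by the exponentials of `S`. -/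
def PPF.fieldOf (P : PPF K) (S : Submodule ℚ P.V) : Subfield P.F :=
  Subfield.closure (P.exp '' S)

/-- The sub-powered-field `S` of `P` is full: exp maps `S` onto the nonzero elements of its
field, and its field is (relatively) algebraically closed. -/
def PPF.FullSub (P : PPF K) (S : Submodule ℚ P.V) : Prop :=
  S ≤ P.D ∧ (∀ y ∈ P.fieldOf S, y ≠ 0 → ∃ x ∈ S, P.exp x = y) ∧
    ∀ y : P.F, (∃ p : Polynomial P.F, p ≠ 0 ∧ (∀ i, p.coeff i ∈ P.fieldOf S) ∧
      Polynomial.eval y p = 0) → y ∈ P.fieldOf S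

/-- `(eV, eF)` is an isomorphism, over the base `D₀`, between the sub-partial-K-powered fields
of `P` generated by `D₂` and `D₃`: `eV` is a `K`-linear bijection of the vector-space parts
mapping `D₂` onto `D₃` and fixing `D₀`, `eF` is a field isomorphism of the field parts fixing
the field of `D₀`, and the pair commutes with exp. -/
def PPF.IsIsoOver (P : PPF K) (D₂ D₃ D₀ : Submodule ℚ P.V)
    (eV : P.V → P.V) (eF : P.F → P.F) : Prop :=
  Set.BijOn eV (span K (D₂ : Set P.V) : Set P.V) (span K (D₃ : Set P.V)) ∧
  Set.BijOn eV (D₂ : Set P.V) (D₃ : Set P.V) ∧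
  (∀ x y : P.V, x ∈ span K (D₂ : Set P.V) → y ∈ span K (D₂ : Set P.V) →
    eV (x + y) = eV x + eV y) ∧
  (∀ (c : K) (x : P.V), x ∈ span K (D₂ : Set P.V) → eV (c • x) = c • eV x) ∧
  (∀ x ∈ D₀, eV x = x) ∧
  Set.BijOn eF (P.fieldOf D₂ : Set P.F) (P.fieldOf D₃ : Set P.F) ∧
  (∀ x y : P.F, x ∈ P.fieldOf D₂ → y ∈ P.fieldOf D₂ → eF (x + y) = eF x + eF y) ∧
  (∀ x y : P.F, x ∈ P.fieldOf D₂ → y ∈ P.fieldOf D₂ → eF (x * y) = eF x * eF y) ∧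
  (∀ x ∈ D₀, eF (P.exp x) = P.exp x) ∧
  (∀ x ∈ D₂, eF (P.exp x) = P.exp (eV x))

/-! Take a maximal algebraically independent tuple `s` from `z ∪ exp z` over `ℚ(D, exp D)`.
The entries of `s` lying in `z` are `K`-linearly independent modulo `span_K D`: since
`K ⊆ D`, a `K`-linear relation modulo `span_K D` would be a degree-one algebraic relation over
`ℚ(D, exp D)`. The remaining entries lie in `exp z` and are algebraically independent over
`ℚ(exp D)`. Hence `td(z, exp z / D, exp D) ≤ ldim_K(z/D) + td(exp z / exp D)`, so
`δ^K(z/D) ≥ δ^exp(z/D) ≥ 0`. -/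

theorem AlgebraicIndependent.of_le_subalgebra {R A : Type*} [CommRing R] [CommRing A]
    [Algebra R A] {S T : Subalgebra R A} (hST : S ≤ T) {ι : Type*} {x : ι → A}
    (hx : AlgebraicIndependent T x) : AlgebraicIndependent S x :=
  hx.of_ringHom_of_comp_eq (Subalgebra.inclusion hST) (RingHom.id A)
    (Subalgebra.inclusion_injective hST) rfl

open MvPolynomial in
theorem AlgebraicIndependent.eq_zero_of_sum_mul_eq_algebraMap {R A : Type*} [CommRing R]
    [CommRing A] [Algebra R A] {ι : Type*} {x : ι → A} (hx : AlgebraicIndependent R x)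
    (t : Finset ι) (c : ι → R) (r : R)
    (h : ∑ i ∈ t, algebraMap R A (c i) * x i = algebraMap R A r) :
    ∀ i ∈ t, c i = 0 := by
  classical
  intro i hi
  have hp : ∑ j ∈ t, C (c j) * X j - C r = 0 := hx.eq_zero_of_aeval_eq_zero _ (by simp [h])
  simpa [coeff_sum, coeff_C_mul, coeff_X, Finsupp.single_left_inj, hi,
    eq_comm (a := (0 : ι →₀ ℕ))] using congrArg (coeff (Finsupp.single i 1)) hp

theorem ldim_eq_finrank_span_image_mkQ (R : Type*) [DivisionRing R] {V : Type*}
    [AddCommGroup V] [Module R V] (A B : Set V) :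
    ldim R A B = Module.finrank R (span R ((span R B).mkQ '' A)) := by
  set f := (span R B).mkQ ∘ₗ (span R (A ∪ B)).subtype
  have hker : LinearMap.ker f = (span R B).comap (span R (A ∪ B)).subtype := by
    rw [LinearMap.ker_comp, Submodule.ker_mkQ]
  have hrange : LinearMap.range f = span R ((span R B).mkQ '' A) := by
    rw [LinearMap.range_comp, Submodule.range_subtype, Submodule.map_span, Set.image_union,
      Submodule.span_union, ← Submodule.map_span _ B, Submodule.mkQ_map_self, sup_bot_eq]
  exact ((Submodule.quotEquivOfEq _ _ hker.symm).trans
    (f.quotKerEquivRange.trans (LinearEquiv.ofEq _ _ hrange))).finrank_eq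

theorem card_le_ldim_of_linearIndependent {R : Type*} [DivisionRing R] {V : Type*}
    [AddCommGroup V] [Module R V] {A : Set V} (hA : A.Finite) (B : Set V) {ι : Type*}
    [Fintype ι] {v : ι → V} (hvA : ∀ i, v i ∈ A)
    (hv : LinearIndependent R ((span R B).mkQ ∘ v)) :
    Fintype.card ι ≤ ldim R A B := by
  have : FiniteDimensional R (span R ((span R B).mkQ '' A)) :=
    FiniteDimensional.span_of_finite R (hA.image _)
  rw [ldim_eq_finrank_span_image_mkQ, ← finrank_span_eq_card hv]
  refine Submodule.finrank_mono (Submodule.span_mono ?_)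
  rintro _ ⟨i, rfl⟩
  exact Set.mem_image_of_mem _ (hvA i)

theorem AlgebraicIndependent.linearIndependent_mkQ_span {R F : Type*} [CommRing R] [Field F]
    [Algebra R F] {S : Subalgebra R F} {ι : Type*} {x : ι → F}
    (hx : AlgebraicIndependent S x) {K : Type*} [Field K] [Algebra K F]
    (hK : ∀ c : K, algebraMap K F c ∈ S) {B : Set F} (hB : B ⊆ S) :
    LinearIndependent K ((span K B).mkQ ∘ x) := by
  have hspan : ∀ y ∈ span K B, y ∈ S := fun y hy => by
    induction hy using Submodule.span_induction with
    | mem y hy => exact hB hy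
    | zero => exact S.zero_mem
    | add _ _ _ _ h₁ h₂ => exact S.add_mem h₁ h₂
    | smul c _ _ h => rw [Algebra.smul_def]; exact S.mul_mem (hK c) h
  rw [linearIndependent_iff']
  intro t g hg i hi
  have hsum : ∑ j ∈ t, g j • x j ∈ span K B := by
    rw [← Submodule.Quotient.mk_eq_zero, ← Submodule.mkQ_apply, map_sum]
    simpa using hg
  have hc := hx.eq_zero_of_sum_mul_eq_algebraMap t (fun j => ⟨_, hK (g j)⟩)
    ⟨_, hspan _ hsum⟩ (by simp [Algebra.smul_def]) i hi
  exact (algebraMap K F).injective (by simpa using congrArg Subtype.val hc)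

section TranscendenceDegree

variable {F : Type*} [Field F] [CharZero F] {A : Set F}

theorem td_bddAbove (hA : A.Finite) (B : Set F) :
    BddAbove {n : ℕ | ∃ s : Fin n → F, (∀ i, s i ∈ A) ∧
      AlgebraicIndependent (Algebra.adjoin ℚ B) s} := by
  refine ⟨Nat.card A, ?_⟩
  rintro n ⟨s, hsA, hs⟩
  have := hA.to_subtype
  simpa using Nat.card_le_card_of_injective (fun i => (⟨s i, hsA i⟩ : A))
    (fun i j h => hs.injective (congrArg Subtype.val h))

theorem exists_algebraicIndependent_fin_td (hA : A.Finite) (B : Set F) :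
    ∃ s : Fin (td A B) → F, (∀ i, s i ∈ A) ∧
      AlgebraicIndependent (Algebra.adjoin ℚ B) s := by
  refine Nat.sSup_mem ?_ (td_bddAbove hA B)
  exact ⟨0, finZeroElim, finZeroElim,
    algebraicIndependent_empty_type_iff.mpr Subtype.val_injective⟩

theorem card_le_td (hA : A.Finite) {B : Set F} {ι : Type*} [Fintype ι] {s : ι → F}
    (hsA : ∀ i, s i ∈ A) (hs : AlgebraicIndependent (Algebra.adjoin ℚ B) s) :
    Fintype.card ι ≤ td A B := by
  unfold td
  exact le_csSup (td_bddAbove hA B) ⟨s ∘ (Fintype.equivFin ι).symm, fun _ => hsA _,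
    hs.comp _ (Fintype.equivFin ι).symm.injective⟩

end TranscendenceDegree

theorem hull_inclusion_general {F : Type} [Field F] [CharZero F] (expF : F → F)
    (Kf : IntermediateField ℚ F) (D : Submodule ℚ F)
    (hK : (Kf : Set F) ⊆ (D : Set F))
    (hstrong : ∀ (n : ℕ) (z : Fin n → F),
      0 ≤ (td (Set.range z ∪ expF '' Set.range z) ((D : Set F) ∪ expF '' (D : Set F)) : ℤ) -
        (ldim ℚ (Set.range z) (D : Set F) : ℤ)) :
    ∀ (n : ℕ) (z : Fin n → F),
      0 ≤ (ldim ↥Kf (Set.range z) (D : Set F) : ℤ) +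
        (td (expF '' Set.range z) (expF '' (D : Set F)) : ℤ) -
        (ldim ℚ (Set.range z) (D : Set F) : ℤ) := by
  classical
  intro n z
  have hz : (Set.range z).Finite := Set.finite_range z
  obtain ⟨s, hsz, hs⟩ := exists_algebraicIndependent_fin_td (hz.union (hz.image expF))
    ((D : Set F) ∪ expF '' (D : Set F))
  have hlin : Fintype.card {i // s i ∈ Set.range z} ≤ ldim Kf (Set.range z) (D : Set F) :=
    card_le_ldim_of_linearIndependent hz _ (v := fun i : {i // s i ∈ Set.range z} => s i)
      (fun i => i.2) <| (hs.comp _ Subtype.val_injective).linearIndependent_mkQ_span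
        (fun c => Algebra.subset_adjoin (Or.inl (hK c.2)))
        (fun _ hx => Algebra.subset_adjoin (Or.inl hx))
  have htd : Fintype.card {i // s i ∉ Set.range z} ≤
      td (expF '' Set.range z) (expF '' (D : Set F)) :=
    card_le_td (hz.image expF) (fun i => (hsz i).resolve_left i.2)
      ((hs.of_le_subalgebra (Algebra.adjoin_mono subset_union_right)).comp _
        Subtype.val_injective)
  have hsplit := Fintype.card_subtype_compl (fun i => s i ∈ Set.range z)
  have hle := Fintype.card_subtype_le (fun i => s i ∈ Set.range z)
  rw [Fintype.card_fin] at hsplit hle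
  have := hstrong n z
  omega

/-- **Hull inclusion** (Lemma `hullinclusion`): in an exponential field `F` with subfield `K`,
any ℚ-subspace `D` containing `X ∪ K` which is exponentially strong in `F` is also strong in
the sense of K-powered fields: δ^K(z/D) ≥ 0 for all finite tuples `z`. -/
theorem hull_inclusion {F : Type} [Field F] [CharZero F] (expF : F → F)
    (hexp : ∀ x y : F, expF (x + y) = expF x * expF y)
    (Kf : IntermediateField ℚ F) (X : Set F) (D : Submodule ℚ F)
    (hX : X ⊆ (D : Set F)) (hK : (Kf : Set F) ⊆ (D : Set F))
    (hstrong : ∀ (n : ℕ) (z : Fin n → F),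
      0 ≤ (td (Set.range z ∪ expF '' Set.range z) ((D : Set F) ∪ expF '' (D : Set F)) : ℤ) -
        (ldim ℚ (Set.range z) (D : Set F) : ℤ)) :
    ∀ (n : ℕ) (z : Fin n → F),
      0 ≤ (ldim ↥Kf (Set.range z) (D : Set F) : ℤ) +
        (td (expF '' Set.range z) (expF '' (D : Set F)) : ℤ) -
        (ldim ℚ (Set.range z) (D : Set F) : ℤ) :=
  hull_inclusion_general expF Kf D hK hstrong
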